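/- arXiv:1911.11216 — 9 statements merged into one kernel-verified Lean document; each statement's English description precedes it below -/
import Mathlib

section
/- Let G and H be groups, φ : G → H a group homomorphism, and S ⊆ G a finite subset satisfying conditions (H2) and (H4). Then for every g ∈ G one has P'⁺(φ(g)) = φ(P⁺(g)) and P'⁻(φ(g)) = φ(P⁻(g)); moreover φ is injective on P⁺(g) and on P⁻(g), so the finite sets P'⁺(φ(g)) and P⁺(g) have the same cardinality, and likewise P'⁻(φ(g)) and P⁻(g). -/
/-- Local perspective present `P⁺(g) = {g*a*b⁻¹ : a, b ∈ S}`. -/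
def Pplus {G : Type*} [Group G] [DecidableEq G] (S : Finset G) (g : G) : Finset G :=
  (S ×ˢ S).image fun p => g * p.1 * p.2⁻¹

/-- Local retrospective present `P⁻(g) = {g*a⁻¹*b : a, b ∈ S}`. -/
def Pminus {G : Type*} [Group G] [DecidableEq G] (S : Finset G) (g : G) : Finset G :=
  (S ×ˢ S).image fun p => g * p.1⁻¹ * p.2

/-- `P'⁺(f) = {f*φ(a)*φ(b)⁻¹ : a, b ∈ S}` in the quotient. -/
def Pplus' {G H : Type*} [Group G] [Group H] [DecidableEq H] (φ : G →* H) (S : Finset G)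
    (f : H) : Finset H :=
  (S ×ˢ S).image fun p => f * φ p.1 * (φ p.2)⁻¹

/-- `P'⁻(f) = {f*φ(a)⁻¹*φ(b) : a, b ∈ S}` in the quotient. -/
def Pminus' {G H : Type*} [Group G] [Group H] [DecidableEq H] (φ : G →* H) (S : Finset G)
    (f : H) : Finset H :=
  (S ×ˢ S).image fun p => f * (φ p.1)⁻¹ * φ p.2

/-- Condition (H2): for all `a, b ∈ S`, `φ(a*b⁻¹) = 1 ↔ a*b⁻¹ = 1`. -/
def CondH2 {G H : Type*} [Group G] [Group H] (φ : G →* H) (S : Finset G) : Prop :=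
  ∀ a ∈ S, ∀ b ∈ S, (φ (a * b⁻¹) = 1 ↔ a * b⁻¹ = 1)

/-- Condition (H4): for all `a, b, c, d ∈ S`, `φ(a*b⁻¹*c*d⁻¹) = 1 ↔ a*b⁻¹*c*d⁻¹ = 1`. -/
def CondH4 {G H : Type*} [Group G] [Group H] (φ : G →* H) (S : Finset G) : Prop :=
  ∀ a ∈ S, ∀ b ∈ S, ∀ c ∈ S, ∀ d ∈ S,
    (φ (a * b⁻¹ * c * d⁻¹) = 1 ↔ a * b⁻¹ * c * d⁻¹ = 1)

theorem perspective_presents_of_quotient {G H : Type*} [Group G] [Group H]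
    [DecidableEq G] [DecidableEq H] (φ : G →* H) (S : Finset G)
    (h2 : CondH2 φ S) (h4 : CondH4 φ S) (g : G) :
    Pplus' φ S (φ g) = (Pplus S g).image φ ∧
    Set.InjOn φ (Pplus S g : Set G) ∧
    (Pplus' φ S (φ g)).card = (Pplus S g).card ∧
    Pminus' φ S (φ g) = (Pminus S g).image φ ∧
    Set.InjOn φ (Pminus S g : Set G) ∧
    (Pminus' φ S (φ g)).card = (Pminus S g).card := by
  have himg : Pplus' φ S (φ g) = (Pplus S g).image φ := by
    simp only [Pplus', Pplus, Finset.image_image]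
    apply Finset.image_congr
    intro p _
    simp [mul_assoc]
  have himg' : Pminus' φ S (φ g) = (Pminus S g).image φ := by
    simp only [Pminus', Pminus, Finset.image_image]
    apply Finset.image_congr
    intro p _
    simp [mul_assoc]
  have hinj : Set.InjOn φ (Pplus S g : Set G) := by
    intro x hx y hy hxy
    simp only [Pplus, Finset.coe_image, Finset.coe_product, Set.mem_image,
      Set.mem_prod] at hx hy
    obtain ⟨⟨a, b⟩, ⟨ha, hb⟩, rfl⟩ := hx
    obtain ⟨⟨c, d⟩, ⟨hc, hd⟩, rfl⟩ := hy
    simp only [map_mul, map_inv] at hxy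
    have hq : φ a * (φ b)⁻¹ = φ c * (φ d)⁻¹ := by
      have := mul_left_cancel ((mul_assoc _ _ _).symm.trans
        (hxy.trans (mul_assoc (φ g) (φ c) (φ d)⁻¹)))
      exact this
    have key : a * b⁻¹ * (d * c⁻¹) = 1 := by
      have : a * b⁻¹ * d * c⁻¹ = 1 := by
        rw [← h4 a ha b hb d hd c hc]
        simp only [map_mul, map_inv]
        rw [mul_assoc (φ a) (φ b)⁻¹, ← mul_assoc, hq]
        group
      rw [← mul_assoc]; exact this
    have he : a * b⁻¹ = c * d⁻¹ := by
      rw [mul_eq_one_iff_eq_inv] at key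
      rw [key]; group
    rw [mul_assoc, mul_assoc, he]
  have hinj' : Set.InjOn φ (Pminus S g : Set G) := by
    intro x hx y hy hxy
    simp only [Pminus, Finset.coe_image, Finset.coe_product, Set.mem_image,
      Set.mem_prod] at hx hy
    obtain ⟨⟨a, b⟩, ⟨ha, hb⟩, rfl⟩ := hx
    obtain ⟨⟨c, d⟩, ⟨hc, hd⟩, rfl⟩ := hy
    simp only [map_mul, map_inv] at hxy
    have hq : (φ a)⁻¹ * φ b = (φ c)⁻¹ * φ d := by
      have := mul_left_cancel ((mul_assoc _ _ _).symm.trans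
        (hxy.trans (mul_assoc (φ g) (φ c)⁻¹ (φ d))))
      exact this
    have key : b * d⁻¹ * c * a⁻¹ = 1 := by
      rw [← h4 b hb d hd c hc a ha]
      simp only [map_mul, map_inv]
      have h2 : φ b = φ a * ((φ c)⁻¹ * φ d) := by
        rw [← hq]; group
      rw [h2]; group
    have he : a⁻¹ * b = c⁻¹ * d := by
      have key2 : (a⁻¹ * b) * (d⁻¹ * c) = 1 := by
        have : a⁻¹ * (b * d⁻¹ * c * a⁻¹) * a = a⁻¹ * 1 * a := by rw [key]
        calc (a⁻¹ * b) * (d⁻¹ * c) = a⁻¹ * (b * d⁻¹ * c * a⁻¹) * a := by group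
        _ = a⁻¹ * 1 * a := this
        _ = 1 := by group
      rw [mul_eq_one_iff_eq_inv] at key2
      rw [key2]; group
    rw [mul_assoc, mul_assoc, he]
  refine ⟨himg, hinj, ?_, himg', hinj', ?_⟩
  · rw [himg, Finset.card_image_of_injOn hinj]
  · rw [himg', Finset.card_image_of_injOn hinj']
end

section
/- Let G and H be groups, φ : G → H a surjective group homomorphism, and S ⊆ G a finite subset satisfying conditions (H2) and (H4). Then for all f₁, f₂ ∈ H there exist g₁, g₂ ∈ G with φ(g₁) = f₁ and φ(g₂) = f₂ such that N'⁺(f₁) ∩ N'⁺(f₂) = φ(N⁺(g₁) ∩ N⁺(g₂)) and φ is injective on N⁺(g₁) ∩ N⁺(g₂); in particular the finite sets N'⁺(f₁) ∩ N'⁺(f₂) and N⁺(g₁) ∩ N⁺(g₂) have the same cardinality. -/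
/-- Forward neighbourhood `N⁺(g) = {g*s : s ∈ S}`. -/
def Nplus {G : Type*} [Group G] [DecidableEq G] (S : Finset G) (g : G) : Finset G :=
  S.image fun s => g * s

/-- Forward neighbourhood in the quotient: `N'⁺(f) = {f*φ(s) : s ∈ S}`. -/
def Nplus' {G H : Type*} [Group G] [Group H] [DecidableEq H] (φ : G →* H) (S : Finset G)
    (f : H) : Finset H :=
  S.image fun s => f * φ s

/-- The image of `N⁺(g₁) ∩ N⁺(g₂)` is always contained in `N'⁺(φ g₁) ∩ N'⁺(φ g₂)`. -/
lemma image_inter_subset {G H : Type*} [Group G] [Group H]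
    [DecidableEq G] [DecidableEq H] (φ : G →* H) (S : Finset G) (g₁ g₂ : G) :
    (Nplus S g₁ ∩ Nplus S g₂).image φ ⊆ Nplus' φ S (φ g₁) ∩ Nplus' φ S (φ g₂) := by
  intro y hy
  rw [Finset.mem_image] at hy
  obtain ⟨z, hz, hzy⟩ := hy
  rw [Finset.mem_inter] at hz ⊢
  obtain ⟨hz1, hz2⟩ := hz
  simp only [Nplus, Finset.mem_image] at hz1 hz2
  obtain ⟨c, hcS, hc⟩ := hz1
  obtain ⟨d, hdS, hd⟩ := hz2
  constructor
  · exact Finset.mem_image.mpr ⟨c, hcS, by rw [← hzy, ← hc, map_mul]⟩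
  · exact Finset.mem_image.mpr ⟨d, hdS, by rw [← hzy, ← hd, map_mul]⟩

/-- Under (H2), `φ` is injective on `N⁺(g₁)` (hence on the intersection). -/
lemma injOn_of_h2 {G H : Type*} [Group G] [Group H]
    [DecidableEq G] [DecidableEq H] (φ : G →* H) (S : Finset G)
    (h2 : CondH2 φ S) (g₁ g₂ : G) :
    Set.InjOn φ ((Nplus S g₁ ∩ Nplus S g₂ : Finset G) : Set G) := by
  intro u hu v hv huv
  simp only [Finset.coe_inter, Set.mem_inter_iff, Finset.mem_coe, Nplus,
    Finset.mem_image] at hu hv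
  obtain ⟨⟨c, hcS, hc⟩, _⟩ := hu
  obtain ⟨⟨c', hc'S, hc'⟩, _⟩ := hv
  subst hc hc'
  rw [map_mul, map_mul] at huv
  have h' : φ c = φ c' := mul_left_cancel huv
  have h1 : φ (c * c'⁻¹) = 1 := by simp [map_mul, h']
  have := (h2 c hcS c' hc'S).mp h1
  rw [mul_inv_eq_one] at this
  rw [this]

theorem forward_neighbourhood_intersections_of_quotient {G H : Type*} [Group G] [Group H]
    [DecidableEq G] [DecidableEq H] (φ : G →* H) (S : Finset G)
    (hsurj : Function.Surjective φ) (h2 : CondH2 φ S) (h4 : CondH4 φ S)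
    (f₁ f₂ : H) :
    ∃ g₁ g₂ : G, φ g₁ = f₁ ∧ φ g₂ = f₂ ∧
      Nplus' φ S f₁ ∩ Nplus' φ S f₂ = (Nplus S g₁ ∩ Nplus S g₂).image φ ∧
      Set.InjOn φ ((Nplus S g₁ ∩ Nplus S g₂ : Finset G) : Set G) ∧
      (Nplus' φ S f₁ ∩ Nplus' φ S f₂).card = (Nplus S g₁ ∩ Nplus S g₂).card := by
  obtain ⟨g₁, hg₁⟩ := hsurj f₁
  by_cases hne : (Nplus' φ S f₁ ∩ Nplus' φ S f₂).Nonempty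
  · obtain ⟨x, hx⟩ := hne
    rw [Finset.mem_inter] at hx
    obtain ⟨hx1, hx2⟩ := hx
    simp only [Nplus', Finset.mem_image] at hx1 hx2
    obtain ⟨a, haS, ha⟩ := hx1
    obtain ⟨b, hbS, hb⟩ := hx2
    have hf2 : f₂ = f₁ * φ a * (φ b)⁻¹ := by
      rw [eq_mul_inv_iff_mul_eq, hb, ha]
    have hg₂ : φ (g₁ * a * b⁻¹) = f₂ := by simp [hf2, hg₁, mul_assoc]
    have heq : Nplus' φ S f₁ ∩ Nplus' φ S f₂ =
        (Nplus S g₁ ∩ Nplus S (g₁ * a * b⁻¹)).image φ := by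
      apply Finset.Subset.antisymm
      · intro y hy
        rw [Finset.mem_inter] at hy
        obtain ⟨hy1, hy2⟩ := hy
        simp only [Nplus', Finset.mem_image] at hy1 hy2
        obtain ⟨c, hcS, hc⟩ := hy1
        obtain ⟨d, hdS, hd⟩ := hy2
        have key : φ (a * b⁻¹ * d * c⁻¹) = 1 := by
          have h0 : f₁ * φ a * (φ b)⁻¹ * φ d = f₁ * φ c := by rw [← hf2, hd, hc]
          have h' : φ a * (φ b)⁻¹ * φ d = φ c :=
            mul_left_cancel (a := f₁) (by rw [← mul_assoc, ← mul_assoc]; exact h0)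
          simp only [map_mul, map_inv]
          rw [mul_inv_eq_one, h']
        have keyG : a * b⁻¹ * d = c := by
          have := (h4 a haS b hbS d hdS c hcS).mp key
          rwa [mul_inv_eq_one] at this
        have hgc : g₁ * c = (g₁ * a * b⁻¹) * d := by
          rw [mul_assoc, mul_assoc, ← mul_assoc a, keyG]
        rw [Finset.mem_image]
        refine ⟨g₁ * c, ?_, by rw [map_mul, hg₁, hc]⟩
        rw [Finset.mem_inter]
        exact ⟨Finset.mem_image.mpr ⟨c, hcS, rfl⟩,
          Finset.mem_image.mpr ⟨d, hdS, hgc.symm⟩⟩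
      · have := image_inter_subset φ S g₁ (g₁ * a * b⁻¹)
        rwa [hg₁, hg₂] at this
    exact ⟨g₁, g₁ * a * b⁻¹, hg₁, hg₂, heq, injOn_of_h2 φ S h2 _ _,
      by rw [heq, Finset.card_image_of_injOn (injOn_of_h2 φ S h2 _ _)]⟩
  · obtain ⟨g₂, hg₂⟩ := hsurj f₂
    rw [Finset.not_nonempty_iff_eq_empty] at hne
    have himg : (Nplus S g₁ ∩ Nplus S g₂).image φ = ∅ := by
      have := image_inter_subset φ S g₁ g₂
      rw [hg₁, hg₂, hne] at this
      exact Finset.subset_empty.mp this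
    have hint : Nplus S g₁ ∩ Nplus S g₂ = ∅ := by
      rwa [Finset.image_eq_empty] at himg
    refine ⟨g₁, g₂, hg₁, hg₂, by rw [hne, himg], by simp [hint], by simp [hne, hint]⟩
end

section
/- Let G and H be groups, φ : G → H a surjective group homomorphism, and S ⊆ G a finite subset satisfying conditions (H2), (H4) and (H6). Then for all f₁, f₂ ∈ H there exist g₁, g₂ ∈ G with φ(g₁) = f₁ and φ(g₂) = f₂ such that P'⁻(f₂) ∩ N'⁺(f₁) = φ(P⁻(g₂) ∩ N⁺(g₁)) and φ is injective on P⁻(g₂) ∩ N⁺(g₁); in particular the finite sets P'⁻(f₂) ∩ N'⁺(f₁) and P⁻(g₂) ∩ N⁺(g₁) have the same cardinality. -/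
/-- Condition (H6): for all `a, b, c, d, e, f ∈ S`,
`φ(a*b⁻¹*c*d⁻¹*e*f⁻¹) = 1 ↔ a*b⁻¹*c*d⁻¹*e*f⁻¹ = 1`. -/
def CondH6 {G H : Type*} [Group G] [Group H] (φ : G →* H) (S : Finset G) : Prop :=
  ∀ a ∈ S, ∀ b ∈ S, ∀ c ∈ S, ∀ d ∈ S, ∀ e ∈ S, ∀ f ∈ S,
    (φ (a * b⁻¹ * c * d⁻¹ * e * f⁻¹) = 1 ↔ a * b⁻¹ * c * d⁻¹ * e * f⁻¹ = 1)
section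

variable {G H : Type*} [Group G] [Group H] {φ : G →* H} {S : Finset G}

lemma CondH2.eq_of_map_eq (h2 : CondH2 φ S) {a b : G} (ha : a ∈ S) (hb : b ∈ S)
    (h : φ a = φ b) : a = b := by
  rw [← mul_inv_eq_one, ← h2 a ha b hb, map_mul, map_inv, h, mul_inv_cancel]

lemma CondH6.eq_of_map_eq (h6 : CondH6 φ S) {a b c d e f : G} (ha : a ∈ S) (hb : b ∈ S)
    (hc : c ∈ S) (hd : d ∈ S) (he : e ∈ S) (hf : f ∈ S)
    (h : φ (a * b⁻¹ * c * d⁻¹ * e) = φ f) : a * b⁻¹ * c * d⁻¹ * e = f := by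
  rw [← mul_inv_eq_one, ← h6 a ha b hb c hc d hd e he f hf, map_mul (f := φ) (_ * e),
    map_inv, h, mul_inv_cancel]

section

variable [DecidableEq G]

lemma mem_Pminus {g x : G} : x ∈ Pminus S g ↔ ∃ a ∈ S, ∃ b ∈ S, g * a⁻¹ * b = x := by
  simp only [Pminus, Finset.mem_image, Finset.mem_product, Prod.exists, and_assoc,
    exists_and_left]

lemma mem_Nplus {g x : G} : x ∈ Nplus S g ↔ ∃ s ∈ S, g * s = x :=
  Finset.mem_image

lemma injOn_Nplus (h2 : CondH2 φ S) (g : G) : Set.InjOn φ (Nplus S g : Set G) := by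
  rintro _ hx _ hy hxy
  obtain ⟨s, hs, rfl⟩ := mem_Nplus.mp hx
  obtain ⟨t, ht, rfl⟩ := mem_Nplus.mp hy
  rw [map_mul, map_mul, mul_right_inj] at hxy
  rw [h2.eq_of_map_eq hs ht hxy]

end

variable [DecidableEq H]

lemma mem_Pminus' {f y : H} : y ∈ Pminus' φ S f ↔ ∃ a ∈ S, ∃ b ∈ S, f * (φ a)⁻¹ * φ b = y := by
  simp only [Pminus', Finset.mem_image, Finset.mem_product, Prod.exists, and_assoc,
    exists_and_left]

lemma mem_Nplus' {f y : H} : y ∈ Nplus' φ S f ↔ ∃ s ∈ S, f * φ s = y :=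
  Finset.mem_image

variable [DecidableEq G]

lemma image_Pminus (g : G) : (Pminus S g).image φ = Pminus' φ S (φ g) := by
  simp only [Pminus, Pminus', Finset.image_image, Function.comp_def, map_mul, map_inv]

lemma image_Nplus (g : G) : (Nplus S g).image φ = Nplus' φ S (φ g) := by
  simp only [Nplus, Nplus', Finset.image_image, Function.comp_def, map_mul]

lemma image_Pminus_inter_Nplus_subset (g₁ g₂ : G) :
    (Pminus S g₂ ∩ Nplus S g₁).image φ ⊆ Pminus' φ S (φ g₂) ∩ Nplus' φ S (φ g₁) :=
  image_Pminus (φ := φ) g₂ ▸ image_Nplus (φ := φ) g₁ ▸ Finset.image_inter_subset _ _ _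

lemma image_Pminus_inter_Nplus (h6 : CondH6 φ S) {g₁ g₂ : G}
    (hne : (Pminus S g₂ ∩ Nplus S g₁).Nonempty) :
    (Pminus S g₂ ∩ Nplus S g₁).image φ = Pminus' φ S (φ g₂) ∩ Nplus' φ S (φ g₁) := by
  refine (image_Pminus_inter_Nplus_subset g₁ g₂).antisymm fun y hy => ?_
  obtain ⟨x, hx⟩ := hne
  obtain ⟨hxP, hxN⟩ := Finset.mem_inter.mp hx
  obtain ⟨a₀, ha₀, b₀, hb₀, rfl⟩ := mem_Pminus.mp hxP
  obtain ⟨s₀, hs₀, hs₀x⟩ := mem_Nplus.mp hxN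
  have hg₂ : g₂ = g₁ * (s₀ * b₀⁻¹ * a₀) := by
    rw [← mul_assoc, ← mul_assoc, hs₀x]; group
  obtain ⟨hyP, hyN⟩ := Finset.mem_inter.mp hy
  obtain ⟨a, ha, b, hb, rfl⟩ := mem_Pminus'.mp hyP
  obtain ⟨s, hs, hsy⟩ := mem_Nplus'.mp hyN
  have hword : s₀ * b₀⁻¹ * a₀ * a⁻¹ * b = s := by
    refine h6.eq_of_map_eq hs₀ hb₀ ha₀ ha hb hs ?_
    rw [← mul_right_inj (φ g₁), ← map_mul, hsy, hg₂]
    simp only [map_mul, map_inv, mul_assoc]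
  have hx : g₂ * a⁻¹ * b = g₁ * s := by
    rw [← hword, hg₂]; group
  refine Finset.mem_image.mpr ⟨g₁ * s, Finset.mem_inter.mpr ⟨?_, ?_⟩, ?_⟩
  · exact mem_Pminus.mpr ⟨a, ha, b, hb, hx⟩
  · exact mem_Nplus.mpr ⟨s, hs, rfl⟩
  · rw [← hx, map_mul, map_mul, map_inv]

lemma exists_preimage_Pminus_inter_Nplus_nonempty {f₂ : H} (g₁ : G)
    (hne : (Pminus' φ S f₂ ∩ Nplus' φ S (φ g₁)).Nonempty) :
    ∃ g₂, φ g₂ = f₂ ∧ (Pminus S g₂ ∩ Nplus S g₁).Nonempty := by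
  obtain ⟨y, hy⟩ := hne
  obtain ⟨hyP, hyN⟩ := Finset.mem_inter.mp hy
  obtain ⟨a, ha, b, hb, rfl⟩ := mem_Pminus'.mp hyP
  obtain ⟨s, hs, hsy⟩ := mem_Nplus'.mp hyN
  refine ⟨g₁ * s * b⁻¹ * a, ?_, g₁ * s, Finset.mem_inter.mpr ⟨?_, ?_⟩⟩
  · simp only [map_mul, map_inv]
    rw [hsy]; group
  · exact mem_Pminus.mpr ⟨a, ha, b, hb, by group⟩
  · exact mem_Nplus.mpr ⟨s, hs, rfl⟩

end

theorem retrospective_forward_intersections_of_quotient_general {G H : Type*} [Group G] [Group H]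
    [DecidableEq G] [DecidableEq H] (φ : G →* H) (S : Finset G)
    (hsurj : Function.Surjective φ) (h2 : CondH2 φ S) (h6 : CondH6 φ S)
    (f₁ f₂ : H) :
    ∃ g₁ g₂ : G, φ g₁ = f₁ ∧ φ g₂ = f₂ ∧
      Pminus' φ S f₂ ∩ Nplus' φ S f₁ = (Pminus S g₂ ∩ Nplus S g₁).image φ ∧
      Set.InjOn φ ((Pminus S g₂ ∩ Nplus S g₁ : Finset G) : Set G) ∧
      (Pminus' φ S f₂ ∩ Nplus' φ S f₁).card = (Pminus S g₂ ∩ Nplus S g₁).card := by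
  obtain ⟨g₁, rfl⟩ := hsurj f₁
  obtain ⟨g₂, rfl, himage⟩ : ∃ g₂, φ g₂ = f₂ ∧
      (Pminus S g₂ ∩ Nplus S g₁).image φ = Pminus' φ S f₂ ∩ Nplus' φ S (φ g₁) := by
    rcases (Pminus' φ S f₂ ∩ Nplus' φ S (φ g₁)).eq_empty_or_nonempty with hempty | hne
    · obtain ⟨g₂, rfl⟩ := hsurj f₂
      exact ⟨g₂, rfl, hempty ▸ Finset.subset_empty.mp
        (hempty ▸ image_Pminus_inter_Nplus_subset g₁ g₂)⟩
    · obtain ⟨g₂, rfl, hne'⟩ := exists_preimage_Pminus_inter_Nplus_nonempty g₁ hne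
      exact ⟨g₂, rfl, image_Pminus_inter_Nplus h6 hne'⟩
  have hinj : Set.InjOn φ ((Pminus S g₂ ∩ Nplus S g₁ : Finset G) : Set G) :=
    (injOn_Nplus h2 g₁).mono (Finset.coe_subset.mpr Finset.inter_subset_right)
  refine ⟨g₁, g₂, rfl, rfl, himage.symm, hinj, ?_⟩
  rw [← himage, Finset.card_image_of_injOn hinj]

theorem retrospective_forward_intersections_of_quotient {G H : Type*} [Group G] [Group H]
    [DecidableEq G] [DecidableEq H] (φ : G →* H) (S : Finset G)
    (hsurj : Function.Surjective φ) (h2 : CondH2 φ S) (h4 : CondH4 φ S) (h6 : CondH6 φ S)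
    (f₁ f₂ : H) :
    ∃ g₁ g₂ : G, φ g₁ = f₁ ∧ φ g₂ = f₂ ∧
      Pminus' φ S f₂ ∩ Nplus' φ S f₁ = (Pminus S g₂ ∩ Nplus S g₁).image φ ∧
      Set.InjOn φ ((Pminus S g₂ ∩ Nplus S g₁ : Finset G) : Set G) ∧
      (Pminus' φ S f₂ ∩ Nplus' φ S f₁).card = (Pminus S g₂ ∩ Nplus S g₁).card :=
  retrospective_forward_intersections_of_quotient_general φ S hsurj h2 h6 f₁ f₂
end

section
/- Let G and H be groups, φ : G → H a group homomorphism, and S ⊆ G a finite subset satisfying conditions (H2) and (H4). If g₁, g₂ ∈ G satisfy g₂ ∉ N⁺(g₁) and φ(g₂) ∈ N'⁺(φ(g₁)), then P⁺(g₁) ∩ N⁻(g₂) = ∅. -/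
/-- Backward neighbourhood `N⁻(g) = {g*s⁻¹ : s ∈ S}`. -/
def Nminus {G : Type*} [Group G] [DecidableEq G] (S : Finset G) (g : G) : Finset G :=
  S.image fun s => g * s⁻¹

theorem perspective_backward_disjoint_of_quotient {G H : Type*} [Group G] [Group H]
    [DecidableEq G] [DecidableEq H] (φ : G →* H) (S : Finset G)
    (h2 : CondH2 φ S) (h4 : CondH4 φ S)
    (g₁ g₂ : G) (hnot : g₂ ∉ Nplus S g₁) (hquot : φ g₂ ∈ Nplus' φ S (φ g₁)) :
    Pplus S g₁ ∩ Nminus S g₂ = ∅ := by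
  rw [Finset.eq_empty_iff_forall_notMem]
  intro x hx
  rw [Finset.mem_inter] at hx
  obtain ⟨hp, hn⟩ := hx
  simp only [Pplus, Nminus, Finset.mem_image, Finset.mem_product] at hp hn
  obtain ⟨⟨a, b⟩, ⟨ha, hb⟩, hab⟩ := hp
  obtain ⟨c, hc, hcx⟩ := hn
  simp only [Nplus', Finset.mem_image] at hquot
  obtain ⟨s, hs, hsx⟩ := hquot
  have hg2 : g₂ = g₁ * a * b⁻¹ * c := by
    have h := (hab.trans hcx.symm).symm
    rw [mul_inv_eq_iff_eq_mul] at h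
    exact h
  have hφ : φ (a * b⁻¹ * c * s⁻¹) = 1 := by
    have h0 : φ g₁ * φ s = φ g₁ * φ (a * b⁻¹ * c) := by
      rw [hsx, hg2]
      simp [map_mul, mul_assoc]
    have h := mul_left_cancel h0
    simp [map_mul, ← h]
  have h1 := (h4 a ha b hb c hc s hs).mp hφ
  apply hnot
  simp only [Nplus, Finset.mem_image]
  refine ⟨s, hs, ?_⟩
  have h5 : a * b⁻¹ * c = s := mul_inv_eq_one.mp h1
  rw [hg2, ← h5]; group
end

section
/- Let G and H be groups, φ : G → H a group homomorphism, and S ⊆ G a finite subset satisfying conditions (H2), (H4) and (H6). If g₁, g₂ ∈ G satisfy g₂ ∉ P⁺(g₁) and φ(g₂) ∈ P'⁺(φ(g₁)), then N⁺(g₁) ∩ N⁺(g₂) = ∅ and P⁺(g₁) ∩ P⁺(g₂) = ∅. -/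
theorem disjoint_neighbourhoods_of_quotient {G H : Type*} [Group G] [Group H]
    [DecidableEq G] [DecidableEq H] (φ : G →* H) (S : Finset G)
    (h2 : CondH2 φ S) (h4 : CondH4 φ S) (h6 : CondH6 φ S)
    (g₁ g₂ : G) (hnot : g₂ ∉ Pplus S g₁) (hquot : φ g₂ ∈ Pplus' φ S (φ g₁)) :
    Nplus S g₁ ∩ Nplus S g₂ = ∅ ∧ Pplus S g₁ ∩ Pplus S g₂ = ∅ := by
  obtain ⟨⟨a, b⟩, hab, heq⟩ := Finset.mem_image.mp hquot
  rw [Finset.mem_product] at hab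
  obtain ⟨ha, hb⟩ := hab
  simp only at heq
  constructor
  · rw [Finset.eq_empty_iff_forall_notMem]
    intro x hx
    rw [Finset.mem_inter] at hx
    obtain ⟨s, hs, hs'⟩ := Finset.mem_image.mp hx.1
    obtain ⟨t, ht, ht'⟩ := Finset.mem_image.mp hx.2
    exact hnot (Finset.mem_image.mpr ⟨(s, t), Finset.mem_product.mpr ⟨hs, ht⟩,
      mul_inv_eq_iff_eq_mul.mpr (hs'.trans ht'.symm)⟩)
  · rw [Finset.eq_empty_iff_forall_notMem]
    intro x hx
    rw [Finset.mem_inter] at hx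
    obtain ⟨⟨a', b'⟩, hab', hx1⟩ := Finset.mem_image.mp hx.1
    obtain ⟨⟨c, d⟩, hcd, hx2⟩ := Finset.mem_image.mp hx.2
    rw [Finset.mem_product] at hab' hcd
    simp only at hx1 hx2
    have eq_g2 : g₂ = g₁ * (a' * b'⁻¹ * d * c⁻¹) := by
      have h : g₁ * a' * b'⁻¹ = g₂ * c * d⁻¹ := hx1.trans hx2.symm
      have : g₂ * c * d⁻¹ * d * c⁻¹ = g₂ := by group
      rw [← this, ← h]; group
    have hphi : φ (b * a⁻¹ * a' * b'⁻¹ * d * c⁻¹) = 1 := by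
      have h1 : φ g₂ = φ g₁ * φ (a' * b'⁻¹ * d * c⁻¹) := by
        rw [eq_g2, map_mul]
      rw [← heq] at h1
      have h2 : φ a * (φ b)⁻¹ = φ (a' * b'⁻¹ * d * c⁻¹) := by
        have := mul_left_cancel ((mul_assoc _ _ _).symm.trans h1)
        rwa [mul_assoc] at this ⊢
      simp only [map_mul, map_inv] at h2 ⊢
      have h3 : φ b * (φ a)⁻¹ * (φ a * (φ b)⁻¹) = 1 := by group
      rw [h2] at h3
      rw [← h3]; group
    have key : b * a⁻¹ * a' * b'⁻¹ * d * c⁻¹ = 1 :=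
      (h6 b hb a ha a' hab'.1 b' hab'.2 d hcd.2 c hcd.1).mp hphi
    apply hnot
    refine Finset.mem_image.mpr ⟨(a, b), Finset.mem_product.mpr ⟨ha, hb⟩, ?_⟩
    simp only
    have : a' * b'⁻¹ * d * c⁻¹ = a * b⁻¹ := by
      have h := congrArg (fun x => a * b⁻¹ * x) key
      simp only [mul_one] at h
      rw [← h]; group
    rw [eq_g2, this]; group
end

section
/- Let V be a real normed space, K ⊆ V a topologically closed convex cone that is pointed (K ∩ (−K) = {0}), and D ⊆ K a convex, norm-bounded subset with 0 ∉ D. For A ∈ V let J(A) := {λ ∈ ℝ : there exists C ∈ D with λ·C − A ∈ K and λ·C + A ∈ K}, and assume J(A) is nonempty for every A ∈ V. Define ν(A) := inf J(A). Then ν is a norm on V: (1) ν(A) ≥ 0 for all A, and ν(A) = 0 if and only if A = 0; (2) ν(μ·A) = |μ|·ν(A) for all μ ∈ ℝ and A ∈ V; (3) ν(A + B) ≤ ν(A) + ν(B) for all A, B ∈ V. -/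
/-!
Every `λ ∈ J(A)` is nonnegative: adding `λ C - A` and `λ C + A` gives `2λ C ∈ K`, and pointedness
forbids `λ < 0` since `C ≠ 0`. The sets `J` are compatible with the linear structure: scaling
`A` by `μ` scales `J(A)` by `|μ|`, and by convexity of `D` one has `J(A) + J(B) ⊆ J(A + B)`.
This makes `ν` a seminorm. Finally, if `ν A = 0` then `±A` are limits of `λ C ± A ∈ K` with
`λ → 0` and `C` bounded, so `±A ∈ K` by closedness and `A = 0` by pointedness.
-/

open Set

open scoped Pointwise in
theorem csInf_le_csInf_add_csInf {s t u : Set ℝ} (hu : BddBelow u) (hs : s.Nonempty)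
    (ht : t.Nonempty) (hst : s + t ⊆ u) : sInf u ≤ sInf s + sInf t := by
  have h : ∀ a ∈ s, sInf u - a ≤ sInf t := fun a ha => le_csInf ht fun b hb => by
    linarith [csInf_le hu (hst (add_mem_add ha hb))]
  have : sInf u - sInf t ≤ sInf s := le_csInf hs fun a ha => by linarith [h a ha]
  linarith

theorem eq_zero_of_mem_of_neg_mem {V : Type*} [AddGroup V] {K : Set V} (hK : K ∩ -K = {0})
    {x : V} (hx : x ∈ K) (hnx : -x ∈ K) : x = 0 :=
  hK.subset ⟨hx, hnx⟩

theorem mem_of_forall_smul_add_mem {V : Type*} [NormedAddCommGroup V] [NormedSpace ℝ V]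
    {K D : Set V} (hK : IsClosed K) (hD : Bornology.IsBounded D) {x : V}
    (h : ∀ ε > (0 : ℝ), ∃ l ∈ Ico 0 ε, ∃ C ∈ D, l • C + x ∈ K) : x ∈ K := by
  obtain ⟨R, hR, hDR⟩ := hD.exists_pos_norm_le
  rw [← hK.closure_eq, Metric.mem_closure_iff]
  intro ε hε
  obtain ⟨l, ⟨hl0, hlε⟩, C, hC, hlC⟩ := h (ε / R) (div_pos hε hR)
  refine ⟨l • C + x, hlC, ?_⟩
  calc dist x (l • C + x) = l * ‖C‖ := by
        rw [dist_comm, dist_add_self_left, norm_smul, Real.norm_of_nonneg hl0]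
    _ ≤ l * R := by gcongr; exact hDR C hC
    _ < ε := (lt_div_iff₀ hR).mp hlε

section supNormBounds

variable {V : Type*} [AddCommGroup V] [Module ℝ V] {K D : Set V} {A B : V} {l m : ℝ}

/-- The set `J(A)` of the paper. -/
def supNormBounds (K D : Set V) (A : V) : Set ℝ :=
  {l | ∃ C ∈ D, l • C - A ∈ K ∧ l • C + A ∈ K}

theorem supNormBounds_neg : supNormBounds K D (-A) = supNormBounds K D A := by
  ext l
  simp only [supNormBounds, mem_ofPred_eq, sub_neg_eq_add, ← sub_eq_add_neg, and_comm]

theorem nonneg_of_mem_supNormBounds (hKadd : ∀ x ∈ K, ∀ y ∈ K, x + y ∈ K)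
    (hKsmul : ∀ c : ℝ, 0 ≤ c → ∀ x ∈ K, c • x ∈ K) (hKpointed : K ∩ -K = {0})
    (hDK : D ⊆ K) (hD0 : (0 : V) ∉ D) (hl : l ∈ supNormBounds K D A) : 0 ≤ l := by
  obtain ⟨C, hC, hsub, hadd⟩ := hl
  by_contra! hneg
  have hsum : (2 * l) • C ∈ K := by
    convert hKadd _ hsub _ hadd using 1
    module
  have hzero : (2 * l) • C = 0 := eq_zero_of_mem_of_neg_mem hKpointed hsum <| by
    simpa [neg_smul] using hKsmul (-(2 * l)) (by linarith) C (hDK hC)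
  rcases smul_eq_zero.mp hzero with h | rfl
  · linarith
  · exact hD0 hC

theorem smul_mem_supNormBounds_of_nonneg (hKsmul : ∀ c : ℝ, 0 ≤ c → ∀ x ∈ K, c • x ∈ K)
    {c : ℝ} (hc : 0 ≤ c) (hl : l ∈ supNormBounds K D A) : c * l ∈ supNormBounds K D (c • A) := by
  obtain ⟨C, hC, hsub, hadd⟩ := hl
  refine ⟨C, hC, ?_, ?_⟩
  · simpa only [smul_sub, smul_smul] using hKsmul c hc _ hsub
  · simpa only [smul_add, smul_smul] using hKsmul c hc _ hadd

theorem smul_mem_supNormBounds (hKsmul : ∀ c : ℝ, 0 ≤ c → ∀ x ∈ K, c • x ∈ K) (μ : ℝ)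
    (hl : l ∈ supNormBounds K D A) : |μ| * l ∈ supNormBounds K D (μ • A) := by
  rcases le_total 0 μ with hμ | hμ
  · rw [abs_of_nonneg hμ]
    exact smul_mem_supNormBounds_of_nonneg hKsmul hμ hl
  · rw [abs_of_nonpos hμ, ← neg_smul_neg]
    exact smul_mem_supNormBounds_of_nonneg hKsmul (neg_nonneg.mpr hμ) (by rwa [supNormBounds_neg])

theorem add_mem_supNormBounds (hKadd : ∀ x ∈ K, ∀ y ∈ K, x + y ∈ K) (hDconv : Convex ℝ D)
    (hl0 : 0 ≤ l) (hm0 : 0 ≤ m) (hl : l ∈ supNormBounds K D A)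
    (hm : m ∈ supNormBounds K D B) : l + m ∈ supNormBounds K D (A + B) := by
  obtain ⟨C, hC, hCsub, hCadd⟩ := hl
  obtain ⟨C', hC', hC'sub, hC'add⟩ := hm
  obtain ⟨E, hE, hEeq⟩ := hDconv.exists_mem_add_smul_eq hC hC' hl0 hm0
  refine ⟨E, hE, ?_, ?_⟩
  · convert hKadd _ hCsub _ hC'sub using 1
    rw [hEeq]; abel
  · convert hKadd _ hCadd _ hC'add using 1
    rw [hEeq]; abel

end supNormBounds

/-- The sup-norm of transformations is a well-defined norm (Proposition 4 of the paper):
`V` is a real normed space, `K` a topologically closed, pointed convex cone, `D ⊆ K` a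
convex norm-bounded set with `0 ∉ D`, `J A` the set of `λ` such that `λ·C ⪰ A ⪰ -λ·C`
for some `C ∈ D`, and `ν A = inf J A`. Then `ν` satisfies the three norm axioms. -/
theorem supNorm_is_norm {V : Type*} [NormedAddCommGroup V] [NormedSpace ℝ V]
    (K : Set V) (hKclosed : IsClosed K)
    (hKadd : ∀ x ∈ K, ∀ y ∈ K, x + y ∈ K)
    (hKsmul : ∀ c : ℝ, 0 ≤ c → ∀ x ∈ K, c • x ∈ K)
    (hKpointed : K ∩ (-K) = {0})
    (D : Set V) (hDK : D ⊆ K) (hDconv : Convex ℝ D)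
    (hDbdd : ∃ M : ℝ, ∀ x ∈ D, ‖x‖ ≤ M) (hD0 : (0 : V) ∉ D)
    (J : V → Set ℝ)
    (hJ : ∀ A : V, J A = {l : ℝ | ∃ C ∈ D, l • C - A ∈ K ∧ l • C + A ∈ K})
    (hJne : ∀ A : V, (J A).Nonempty)
    (ν : V → ℝ) (hν : ∀ A : V, ν A = sInf (J A)) :
    (∀ A : V, 0 ≤ ν A ∧ (ν A = 0 ↔ A = 0)) ∧
    (∀ (μ : ℝ) (A : V), ν (μ • A) = |μ| * ν A) ∧
    (∀ A B : V, ν (A + B) ≤ ν A + ν B) := by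
  obtain rfl : J = supNormBounds K D := funext hJ
  have hnonneg : ∀ A, ∀ l ∈ supNormBounds K D A, 0 ≤ l := fun A l =>
    nonneg_of_mem_supNormBounds hKadd hKsmul hKpointed hDK hD0
  have hbdd : ∀ A, BddBelow (supNormBounds K D A) := fun A => ⟨0, hnonneg A⟩
  have smul_le : ∀ (μ : ℝ) A, ν (μ • A) ≤ ‖μ‖ * ν A := fun μ A => by
    rw [hν, hν, Real.norm_eq_abs, ← smul_eq_mul, ← Real.sInf_smul_of_nonneg (abs_nonneg μ)]
    refine csInf_le_csInf (hbdd _) ((hJne A).smul_set) ?_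
    rintro _ ⟨l, hl, rfl⟩
    exact smul_mem_supNormBounds hKsmul μ hl
  have add_le : ∀ A B, ν (A + B) ≤ ν A + ν B := fun A B => by
    rw [hν, hν, hν]
    exact csInf_le_csInf_add_csInf (hbdd _) (hJne A) (hJne B) <| by
      rintro _ ⟨l, hl, m, hm, rfl⟩
      exact add_mem_supNormBounds hKadd hDconv (hnonneg A l hl) (hnonneg B m hm) hl hm
  have map_zero : ν 0 = 0 := le_antisymm (by simpa using smul_le 0 0)
    (hν 0 ▸ le_csInf (hJne 0) (hnonneg 0))
  let p : Seminorm ℝ V := .ofSMulLE ν map_zero add_le smul_le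
  have mem_of_eq_zero : ∀ A, ν A = 0 → A ∈ K := fun A hA => by
    refine mem_of_forall_smul_add_mem hKclosed (isBounded_iff_forall_norm_le.mpr hDbdd)
      fun ε hε => ?_
    obtain ⟨l, hl, hlε⟩ := exists_lt_of_csInf_lt (hJne A) (by rwa [← hν, hA])
    have hl0 := hnonneg A l hl
    obtain ⟨C, hC, -, hadd⟩ := hl
    exact ⟨l, ⟨hl0, hlε⟩, C, hC, hadd⟩
  have eq_zero : ∀ A, ν A = 0 → A = 0 := fun A hA =>
    eq_zero_of_mem_of_neg_mem hKpointed (mem_of_eq_zero A hA)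
      (mem_of_eq_zero (-A) (by rwa [hν, supNormBounds_neg, ← hν]))
  exact ⟨fun A => ⟨apply_nonneg p A, eq_zero A, fun h => h ▸ map_zero⟩,
    fun μ A => map_smul_eq_mul p μ A, add_le⟩
end

section
/- Let V be a real associative algebra, K ⊆ V a convex cone that is closed under multiplication (x ∈ K and y ∈ K imply x*y ∈ K), and D ⊆ V a subset closed under multiplication (c ∈ D and d ∈ D imply c*d ∈ D). For A ∈ V let J(A) := {λ ∈ ℝ : λ ≥ 0 and there exists C ∈ D with λ·C − A ∈ K and λ·C + A ∈ K}. Then for all A, B ∈ V: if x ∈ J(A) and y ∈ J(B) then x·y ∈ J(A*B); consequently, if J(A) and J(B) are nonempty, then inf J(A*B) ≤ (inf J(A)) · (inf J(B)). -/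
/-- Submultiplicativity of the sup-norm (Proposition 5 of the paper): in a real
associative algebra `V`, with `K` a convex cone closed under multiplication and `D`
a set closed under multiplication, if `x ∈ J(A)` and `y ∈ J(B)` then `x·y ∈ J(A*B)`;
consequently `inf J(A*B) ≤ inf J(A) · inf J(B)` whenever `J(A)` and `J(B)` are nonempty. -/
theorem supNorm_submultiplicative {V : Type*} [NonUnitalRing V] [Module ℝ V]
    [SMulCommClass ℝ V V] [IsScalarTower ℝ V V]
    (K : Set V)
    (hKadd : ∀ x ∈ K, ∀ y ∈ K, x + y ∈ K)
    (hKsmul : ∀ c : ℝ, 0 ≤ c → ∀ x ∈ K, c • x ∈ K)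
    (hKmul : ∀ x ∈ K, ∀ y ∈ K, x * y ∈ K)
    (D : Set V) (hDmul : ∀ c ∈ D, ∀ d ∈ D, c * d ∈ D)
    (J : V → Set ℝ)
    (hJ : ∀ A : V, J A = {l : ℝ | 0 ≤ l ∧ ∃ C ∈ D, l • C - A ∈ K ∧ l • C + A ∈ K}) :
    (∀ A B : V, ∀ x ∈ J A, ∀ y ∈ J B, x * y ∈ J (A * B)) ∧
    (∀ A B : V, (J A).Nonempty → (J B).Nonempty →
      sInf (J (A * B)) ≤ sInf (J A) * sInf (J B)) := by
  have hmain : ∀ A B : V, ∀ x ∈ J A, ∀ y ∈ J B, x * y ∈ J (A * B) := by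
    intro A B x hx y hy
    rw [hJ] at hx hy ⊢
    obtain ⟨hx0, C, hC, hC1, hC2⟩ := hx
    obtain ⟨hy0, C', hC', hC1', hC2'⟩ := hy
    refine ⟨mul_nonneg hx0 hy0, C * C', hDmul C hC C' hC', ?_, ?_⟩
    · have key : (x * y) • (C * C') - A * B
          = (1/2 : ℝ) • ((x • C - A) * (y • C' + B) + (x • C + A) * (y • C' - B)) := by
        simp only [sub_mul, add_mul, mul_add, mul_sub, smul_mul_assoc, mul_smul_comm,
          smul_smul, smul_add, smul_sub]
        module
      rw [key]
      exact hKsmul _ (by norm_num) _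
        (hKadd _ (hKmul _ hC1 _ hC2') _ (hKmul _ hC2 _ hC1'))
    · have key : (x * y) • (C * C') + A * B
          = (1/2 : ℝ) • ((x • C - A) * (y • C' - B) + (x • C + A) * (y • C' + B)) := by
        simp only [sub_mul, add_mul, mul_add, mul_sub, smul_mul_assoc, mul_smul_comm,
          smul_smul, smul_add, smul_sub]
        module
      rw [key]
      exact hKsmul _ (by norm_num) _
        (hKadd _ (hKmul _ hC1 _ hC1') _ (hKmul _ hC2 _ hC2'))
  refine ⟨hmain, ?_⟩
  intro A B hA hB
  have hbdd : ∀ C : V, BddBelow (J C) := by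
    intro C
    refine ⟨0, fun z hz => ?_⟩
    rw [hJ] at hz; exact hz.1
  set a := sInf (J A) with ha
  set b := sInf (J B) with hb
  have ha0 : 0 ≤ a := le_csInf hA (fun z hz => by rw [hJ] at hz; exact hz.1)
  have hb0 : 0 ≤ b := le_csInf hB (fun z hz => by rw [hJ] at hz; exact hz.1)
  refine le_of_forall_pos_le_add ?_
  intro ε hε
  set δ : ℝ := min 1 (ε / (a + b + 1)) with hδdef
  have hδ0 : 0 < δ := lt_min one_pos (div_pos hε (by linarith))
  obtain ⟨x, hx, hxlt⟩ := exists_lt_of_csInf_lt hA (lt_add_of_pos_right a hδ0)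
  obtain ⟨y, hy, hylt⟩ := exists_lt_of_csInf_lt hB (lt_add_of_pos_right b hδ0)
  have hx0 : 0 ≤ x := by have := hx; rw [hJ] at this; exact this.1
  have hy0 : 0 ≤ y := by have := hy; rw [hJ] at this; exact this.1
  have h1 : sInf (J (A * B)) ≤ x * y :=
    csInf_le (hbdd _) (hmain A B x hx y hy)
  have hδ1 : δ ≤ 1 := min_le_left _ _
  have hδ2 : δ * (a + b + 1) ≤ ε := by
    have := min_le_right (1:ℝ) (ε / (a + b + 1))
    calc δ * (a + b + 1) ≤ (ε / (a + b + 1)) * (a + b + 1) := by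
          apply mul_le_mul_of_nonneg_right this (by linarith)
      _ = ε := div_mul_cancel₀ _ (by positivity)
  have hxy : x * y ≤ (a + δ) * (b + δ) :=
    mul_le_mul hxlt.le hylt.le hy0 (by linarith)
  nlinarith [sq_nonneg δ, hδ0.le]
end

section
/- Let E be a real vector space, K ⊆ E a convex cone, and e ∈ K. Suppose there exists a linear functional φ : E → ℝ with φ(x) ≥ 0 for all x ∈ K and φ(e) = 1. Let T : E → E be a linear map with T(K) ⊆ K, and suppose there exists μ₀ ≥ 0 with μ₀·e − T(e) ∈ K. Define N(T(e)) := inf{μ ≥ 0 : μ·e − T(e) ∈ K and μ·e + T(e) ∈ K} and ν(T) := inf{λ ≥ 0 : there exists a linear map C : E → E with C(K) ⊆ K, C(e) = e, and both λ·C − T and λ·C + T mapping K into K}. Then ν(T) = N(T(e)). -/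
/-- The sup-norm of a positive transformation equals the sup-norm of its action on the
deterministic effect (Lemma 20 of the paper): for a positive linear map `T` (i.e.
`T(K) ⊆ K`) with `T(e)` dominated by a multiple of `e`, the transformation sup-norm
`ν(T)` equals the effect sup-norm `N(T e)`. -/
theorem supNorm_positive_map_eq {E : Type*} [AddCommGroup E] [Module ℝ E]
    (K : Set E)
    (hKadd : ∀ x ∈ K, ∀ y ∈ K, x + y ∈ K)
    (hKsmul : ∀ c : ℝ, 0 ≤ c → ∀ x ∈ K, c • x ∈ K)
    (e : E) (he : e ∈ K)
    (φ : E →ₗ[ℝ] ℝ) (hφpos : ∀ x ∈ K, 0 ≤ φ x) (hφe : φ e = 1)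
    (T : E →ₗ[ℝ] E) (hTK : ∀ x ∈ K, T x ∈ K)
    (hdom : ∃ μ₀ : ℝ, 0 ≤ μ₀ ∧ μ₀ • e - T e ∈ K) :
    sInf {l : ℝ | 0 ≤ l ∧ ∃ C : E →ₗ[ℝ] E, (∀ x ∈ K, C x ∈ K) ∧ C e = e ∧
        ∀ x ∈ K, l • C x - T x ∈ K ∧ l • C x + T x ∈ K} =
      sInf {μ : ℝ | 0 ≤ μ ∧ μ • e - T e ∈ K ∧ μ • e + T e ∈ K} := by
  obtain ⟨μ₀, hμ₀, hμ₀dom⟩ := hdom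
  set S₁ := {l : ℝ | 0 ≤ l ∧ ∃ C : E →ₗ[ℝ] E, (∀ x ∈ K, C x ∈ K) ∧ C e = e ∧
        ∀ x ∈ K, l • C x - T x ∈ K ∧ l • C x + T x ∈ K} with hS₁
  set S₂ := {μ : ℝ | 0 ≤ μ ∧ μ • e - T e ∈ K ∧ μ • e + T e ∈ K} with hS₂
  -- S₂ is nonempty
  have hμ₀S₂ : μ₀ ∈ S₂ :=
    ⟨hμ₀, hμ₀dom, hKadd _ (hKsmul μ₀ hμ₀ e he) _ (hTK e he)⟩
  have hS₂ne : S₂.Nonempty := ⟨μ₀, hμ₀S₂⟩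
  -- S₂ is upward closed
  have hS₂up : ∀ μ ∈ S₂, ∀ μ', μ ≤ μ' → μ' ∈ S₂ := by
    rintro μ ⟨hμ0, h1, h2⟩ μ' hle
    have hd : (0:ℝ) ≤ μ' - μ := by linarith
    refine ⟨le_trans hμ0 hle, ?_, ?_⟩
    · have := hKadd _ (hKsmul _ hd e he) _ h1
      have heq : (μ' - μ) • e + (μ • e - T e) = μ' • e - T e := by
        rw [sub_smul]; abel
      rwa [heq] at this
    · have := hKadd _ (hKsmul _ hd e he) _ h2
      have heq : (μ' - μ) • e + (μ • e + T e) = μ' • e + T e := by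
        rw [sub_smul]; abel
      rwa [heq] at this
  -- key: positive elements of S₂ are in S₁
  have hkey : ∀ μ ∈ S₂, 0 < μ → μ ∈ S₁ := by
    rintro μ ⟨hμ0, h1, h2⟩ hμpos
    have hμne : μ ≠ 0 := ne_of_gt hμpos
    refine ⟨le_of_lt hμpos, μ⁻¹ • (φ.smulRight (μ • e - T e) + T), ?_, ?_, ?_⟩
    · intro x hx
      simp only [LinearMap.smul_apply, LinearMap.add_apply, LinearMap.smulRight_apply]
      exact hKsmul _ (inv_nonneg.mpr (le_of_lt hμpos)) _
        (hKadd _ (hKsmul _ (hφpos x hx) _ h1) _ (hTK x hx))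
    · simp only [LinearMap.smul_apply, LinearMap.add_apply, LinearMap.smulRight_apply, hφe,
        one_smul]
      rw [sub_add_cancel, smul_smul, inv_mul_cancel₀ hμne, one_smul]
    · intro x hx
      have hCx : μ • (μ⁻¹ • (φ.smulRight (μ • e - T e) + T)) x = φ x • (μ • e - T e) + T x := by
        simp only [LinearMap.smul_apply, LinearMap.add_apply, LinearMap.smulRight_apply,
          smul_smul, mul_inv_cancel₀ hμne, one_smul]
      constructor
      · have heq : μ • (μ⁻¹ • (φ.smulRight (μ • e - T e) + T)) x - T x
            = φ x • (μ • e - T e) := by rw [hCx]; abel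
        rw [heq]
        exact hKsmul _ (hφpos x hx) _ h1
      · have heq : μ • (μ⁻¹ • (φ.smulRight (μ • e - T e) + T)) x + T x
            = φ x • (μ • e - T e) + (T x + T x) := by rw [hCx]; abel
        rw [heq]
        exact hKadd _ (hKsmul _ (hφpos x hx) _ h1) _ (hKadd _ (hTK x hx) _ (hTK x hx))
  -- S₁ ⊆ S₂
  have hsub : S₁ ⊆ S₂ := by
    rintro l ⟨hl0, C, hCK, hCe, hC⟩
    obtain ⟨ha, hb⟩ := hC e he
    rw [hCe] at ha hb
    exact ⟨hl0, ha, hb⟩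
  have hS₁ne : S₁.Nonempty :=
    ⟨μ₀ + 1, hkey _ (hS₂up μ₀ hμ₀S₂ _ (by linarith)) (by linarith)⟩
  have hbdd₂ : BddBelow S₂ := ⟨0, fun x hx => hx.1⟩
  have hbdd₁ : BddBelow S₁ := ⟨0, fun x hx => hx.1⟩
  have hinf₂0 : 0 ≤ sInf S₂ := le_csInf hS₂ne (fun x hx => hx.1)
  apply le_antisymm
  · -- sInf S₁ ≤ sInf S₂
    refine le_of_forall_pos_le_add (fun ε hε => ?_)
    obtain ⟨a, haS₂, ha⟩ := Real.lt_sInf_add_pos hS₂ne hε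
    have hmem : sInf S₂ + ε ∈ S₂ := hS₂up a haS₂ _ (le_of_lt ha)
    have hpos : 0 < sInf S₂ + ε := by linarith
    exact csInf_le hbdd₁ (hkey _ hmem hpos)
  · exact csInf_le_csInf hbdd₂ hS₁ne hsub
end

section
/- Let E be a real normed space, K ⊆ E a topologically closed convex cone, and e ∈ K an order unit, i.e. for every a ∈ E there exists μ ≥ 0 with μ·e − a ∈ K and μ·e + a ∈ K. Then for every a ∈ E, inf{μ ≥ 0 : μ·e − a ∈ K and μ·e + a ∈ K} = sup{|ρ(a)| : ρ : E → ℝ continuous linear, ρ(x) ≥ 0 for all x ∈ K, and ρ(e) ≤ 1}. -/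
/-- Identification of the sup-norm and the operational norm of effects (Appendix A of
the paper): if `K` is a topologically closed convex cone in a real normed space `E` and
`e ∈ K` is an order unit, then for every `a` the order-unit norm
`inf {μ ≥ 0 : μ·e ⪰ a ⪰ −μ·e}` equals the supremum of `|ρ(a)|` over positive continuous
linear functionals `ρ` with `ρ(e) ≤ 1`. -/
theorem orderUnitNorm_eq_sup_states {E : Type*} [NormedAddCommGroup E] [NormedSpace ℝ E]
    (K : Set E) (hKclosed : IsClosed K)
    (hKadd : ∀ x ∈ K, ∀ y ∈ K, x + y ∈ K)
    (hKsmul : ∀ c : ℝ, 0 ≤ c → ∀ x ∈ K, c • x ∈ K)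
    (e : E) (he : e ∈ K)
    (horder : ∀ a : E, ∃ μ : ℝ, 0 ≤ μ ∧ μ • e - a ∈ K ∧ μ • e + a ∈ K)
    (a : E) :
    sInf {μ : ℝ | 0 ≤ μ ∧ μ • e - a ∈ K ∧ μ • e + a ∈ K} =
      sSup {x : ℝ | ∃ ρ : E →L[ℝ] ℝ, (∀ y ∈ K, 0 ≤ ρ y) ∧ ρ e ≤ 1 ∧ x = |ρ a|} := by
  classical
  set S := {μ : ℝ | 0 ≤ μ ∧ μ • e - a ∈ K ∧ μ • e + a ∈ K} with hSdef
  set T := {x : ℝ | ∃ ρ : E →L[ℝ] ℝ, (∀ y ∈ K, 0 ≤ ρ y) ∧ ρ e ≤ 1 ∧ x = |ρ a|} with hTdef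
  have hKconv : Convex ℝ K := by
    intro x hx y hy p q hp hq _
    exact hKadd _ (hKsmul p hp x hx) _ (hKsmul q hq y hy)
  have hzero : (0 : E) ∈ K := by simpa using hKsmul 0 le_rfl e he
  have hSne : S.Nonempty := horder a
  have hSbdd : BddBelow S := ⟨0, fun μ hμ => hμ.1⟩
  have hSclosed : IsClosed S := by
    have h1 : IsClosed {μ : ℝ | 0 ≤ μ} := isClosed_Ici
    have h2 : IsClosed {μ : ℝ | μ • e - a ∈ K} :=
      hKclosed.preimage (by continuity)
    have h3 : IsClosed {μ : ℝ | μ • e + a ∈ K} :=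
      hKclosed.preimage (by continuity)
    have : S = {μ : ℝ | 0 ≤ μ} ∩ ({μ : ℝ | μ • e - a ∈ K} ∩ {μ : ℝ | μ • e + a ∈ K}) := by
      ext μ; simp [hSdef, Set.mem_setOf_eq, and_assoc]
    rw [this]
    exact h1.inter (h2.inter h3)
  have hMmem : sInf S ∈ S := hSclosed.csInf_mem hSne hSbdd
  obtain ⟨hM0, hM1, hM2⟩ := hMmem
  -- every state value is bounded by sInf S
  have hTbound : ∀ x ∈ T, x ≤ sInf S := by
    rintro x ⟨ρ, hpos, hρe, rfl⟩
    have he0 : 0 ≤ ρ e := hpos e he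
    have l1 := hpos _ hM1
    have l2 := hpos _ hM2
    rw [map_sub, map_smul, smul_eq_mul] at l1
    rw [map_add, map_smul, smul_eq_mul] at l2
    rw [abs_le]
    constructor <;> nlinarith
  have hTne : T.Nonempty := ⟨0, 0, by simp, by simp, by simp⟩
  have hTbdd : BddAbove T := ⟨sInf S, hTbound⟩
  -- separation lemma
  have sep : ∀ b : E, ∀ c : ℝ, 0 ≤ c → c • e - b ∉ K →
      (∀ ρ : E →L[ℝ] ℝ, (∀ y ∈ K, 0 ≤ ρ y) → ρ e ≤ 1 → ρ b ≤ sInf S) →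
      ∃ ρ : E →L[ℝ] ℝ, (∀ y ∈ K, 0 ≤ ρ y) ∧ ρ e ≤ 1 ∧ c < ρ b := by
    intro b c hc hnb hbdd
    obtain ⟨f, u, hfu, hKf⟩ := geometric_hahn_banach_point_closed hKconv hKclosed hnb
    have hu0 : u < 0 := by simpa using hKf 0 hzero
    have hfpos : ∀ y ∈ K, 0 ≤ f y := by
      intro y hy
      by_contra h
      push_neg at h
      have hcpos : 0 < (u - 1) / f y := div_pos_of_neg_of_neg (by linarith) h
      have hmem := hKf _ (hKsmul _ hcpos.le y hy)
      rw [map_smul, smul_eq_mul, div_mul_cancel₀ _ (ne_of_lt h)] at hmem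
      linarith
    have hfe : 0 ≤ f e := hfpos e he
    have hfb : c * f e < f b := by
      have h := hfu
      rw [map_sub, map_smul, smul_eq_mul] at h
      linarith
    have hfe' : 0 < f e := by
      rcases hfe.lt_or_eq with h | h
      · exact h
      · exfalso
        have hfb0 : 0 < f b := by nlinarith
        set t := (max (sInf S) 0 + 1) / f b with ht_def
        have ht : 0 ≤ t := div_nonneg (by positivity) hfb0.le
        have hbd := hbdd (t • f)
          (fun y hy => by
            simp only [ContinuousLinearMap.smul_apply, smul_eq_mul]
            exact mul_nonneg ht (hfpos y hy))
          (by simp [← h, smul_eq_mul])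
        simp only [ContinuousLinearMap.smul_apply, smul_eq_mul] at hbd
        rw [ht_def, div_mul_cancel₀ _ hfb0.ne'] at hbd
        have : sInf S ≤ max (sInf S) 0 := le_max_left _ _
        linarith
    refine ⟨(f e)⁻¹ • f, fun y hy => ?_, ?_, ?_⟩
    · simp only [ContinuousLinearMap.smul_apply, smul_eq_mul]
      exact mul_nonneg (inv_nonneg.mpr hfe) (hfpos y hy)
    · simp [inv_mul_cancel₀ hfe'.ne']
    · simp only [ContinuousLinearMap.smul_apply, smul_eq_mul]
      rw [inv_mul_eq_div, lt_div_iff₀ hfe']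
      linarith
  -- the reverse inequality
  have hle : sInf S ≤ sSup T := by
    apply le_of_forall_lt
    intro c hc
    rcases lt_or_ge c 0 with hc0 | hc0
    · have h0T : (0 : ℝ) ∈ T := ⟨0, by simp, by simp, by simp⟩
      exact lt_of_lt_of_le hc0 (le_csSup hTbdd h0T)
    · have hcS : c ∉ S := fun h => absurd (csInf_le hSbdd h) (not_le.2 hc)
      have hcases : c • e - a ∉ K ∨ c • e + a ∉ K := by
        by_contra h
        push_neg at h
        exact hcS ⟨hc0, h.1, h.2⟩
      rcases hcases with h | h
      · obtain ⟨ρ, hp, he1, hcb⟩ := sep a c hc0 h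
          (fun ρ hp he1 => le_trans (le_abs_self _) (hTbound _ ⟨ρ, hp, he1, rfl⟩))
        have hmem : |ρ a| ∈ T := ⟨ρ, hp, he1, rfl⟩
        exact lt_of_lt_of_le (lt_of_lt_of_le hcb (le_abs_self _)) (le_csSup hTbdd hmem)
      · have h' : c • e - (-a) ∉ K := by rwa [sub_neg_eq_add]
        obtain ⟨ρ, hp, he1, hcb⟩ := sep (-a) c hc0 h'
          (fun ρ hp he1 => by
            have : ρ (-a) ≤ |ρ a| := by rw [map_neg]; exact neg_le_abs _
            exact le_trans this (hTbound _ ⟨ρ, hp, he1, rfl⟩))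
        have hmem : |ρ a| ∈ T := ⟨ρ, hp, he1, rfl⟩
        have : c < |ρ a| := lt_of_lt_of_le hcb (by rw [map_neg]; exact neg_le_abs _)
        exact lt_of_lt_of_le this (le_csSup hTbdd hmem)
  exact le_antisymm hle (csSup_le hTne hTbound)
end
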